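/- arXiv:cs/0211033 — 5 statements merged into one kernel-verified Lean document; each statement's English description precedes it below -/
import Mathlib

section
/- The correspondence between k-colorings and models of the coloring data-program pair is a bijection: the map f ↦ D ∪ {clrd(v, f(v)) : v ∈ V} is a bijection between the set of proper k-colorings of G and the set of models of the data-program pair (D_gcl(G,k), P_gcl). -/
/-- Ground atoms of the graph-coloring encoding.  The Herbrand universe
consists of the vertices (`Sum.inl v`) and the colors `1,…,k`
(`Sum.inr i` with `i : Fin k`). -/
inductive ColAtom (V : Type) (k : ℕ) where
  | vtx : V ⊕ Fin k → ColAtom V k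
  | edge : V ⊕ Fin k → V ⊕ Fin k → ColAtom V k
  | color : V ⊕ Fin k → ColAtom V k
  | clrd : V ⊕ Fin k → V ⊕ Fin k → ColAtom V k

/-- The data set `D_gcl(G,k)`. -/
def colData {V : Type} (G : SimpleGraph V) (k : ℕ) : Set (ColAtom V k) :=
  {a | (∃ v : V, a = .vtx (.inl v)) ∨
       (∃ v w : V, G.Adj v w ∧ a = .edge (.inl v) (.inl w)) ∨
       (∃ i : Fin k, a = .color (.inr i))}

/-- `M` is a model of the data-program pair `(D_gcl(G,k), P_gcl)`: it
satisfies the closed-world completion of the data and all ground instances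
(over the Herbrand universe) of the rules (C1)–(C5); equality atoms are
interpreted as identity of constants and the e-atom `∃C clrd(X,C)` grounds to
the disjunction over all constants. -/
def IsColModel {V : Type} (G : SimpleGraph V) (k : ℕ)
    (M : Set (ColAtom V k)) : Prop :=
  -- closed-world completion of the data
  (∀ u, ColAtom.vtx u ∈ M ↔ ∃ v : V, u = .inl v) ∧
  (∀ u w, ColAtom.edge u w ∈ M ↔ ∃ v v' : V, G.Adj v v' ∧ u = .inl v ∧ w = .inl v') ∧
  (∀ u, ColAtom.color u ∈ M ↔ ∃ i : Fin k, u = .inr i) ∧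
  -- (C1) clrd(X,C) → vtx(X)
  (∀ x c, ColAtom.clrd x c ∈ M → ColAtom.vtx x ∈ M) ∧
  -- (C2) clrd(X,C) → color(C)
  (∀ x c, ColAtom.clrd x c ∈ M → ColAtom.color c ∈ M) ∧
  -- (C3) vtx(X) → ∃C clrd(X,C)
  (∀ x, ColAtom.vtx x ∈ M → ∃ c, ColAtom.clrd x c ∈ M) ∧
  -- (C4) clrd(X,C) ∧ clrd(X,D) → C = D
  (∀ x c d, ColAtom.clrd x c ∈ M → ColAtom.clrd x d ∈ M → c = d) ∧
  -- (C5) edge(X,Y) ∧ clrd(X,C) ∧ clrd(Y,C) → ⊥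
  (∀ x y c, ColAtom.edge x y ∈ M → ColAtom.clrd x c ∈ M →
    ColAtom.clrd y c ∈ M → False)

/-- The map `f ↦ D ∪ {clrd(v, f(v)) : v ∈ V}` is a bijection between the set
of proper `k`-colorings of `G` and the set of models of the data-program pair
`(D_gcl(G,k), P_gcl)`. -/
theorem stmt3 {V : Type} [Fintype V] (G : SimpleGraph V) (k : ℕ) (hk : 0 < k) :
    Set.BijOn
      (fun f : V → Fin k =>
        colData G k ∪ {a | ∃ v : V, a = ColAtom.clrd (.inl v) (.inr (f v))})
      {f | ∀ v w : V, G.Adj v w → f v ≠ f w}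
      {M | IsColModel G k M} := by
  constructor
  · -- MapsTo
    intro f hf
    refine ⟨?_, ?_, ?_, ?_, ?_, ?_, ?_, ?_⟩
    · intro u
      constructor
      · rintro (h | ⟨v, hv⟩)
        · rcases h with ⟨v, hv⟩ | ⟨v, w, _, hv⟩ | ⟨i, hi⟩ <;> simp_all
        · simp at hv
      · rintro ⟨v, rfl⟩; exact Or.inl (Or.inl ⟨v, rfl⟩)
    · intro u w
      constructor
      · rintro (h | ⟨v, hv⟩)
        · rcases h with ⟨v, hv⟩ | ⟨v, w', ha, hv⟩ | ⟨i, hi⟩ <;> simp_all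
        · simp at hv
      · rintro ⟨v, v', ha, rfl, rfl⟩; exact Or.inl (Or.inr (Or.inl ⟨v, v', ha, rfl⟩))
    · intro u
      constructor
      · rintro (h | ⟨v, hv⟩)
        · rcases h with ⟨v, hv⟩ | ⟨v, w', ha, hv⟩ | ⟨i, hi⟩ <;> simp_all
        · simp at hv
      · rintro ⟨i, rfl⟩; exact Or.inl (Or.inr (Or.inr ⟨i, rfl⟩))
    · rintro x c (h | ⟨v, hv⟩)
      · rcases h with ⟨v, hv⟩ | ⟨v, w', ha, hv⟩ | ⟨i, hi⟩ <;> simp_all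
      · obtain ⟨rfl, rfl⟩ := ColAtom.clrd.inj hv
        exact Or.inl (Or.inl ⟨v, rfl⟩)
    · rintro x c (h | ⟨v, hv⟩)
      · rcases h with ⟨v, hv⟩ | ⟨v, w', ha, hv⟩ | ⟨i, hi⟩ <;> simp_all
      · obtain ⟨rfl, rfl⟩ := ColAtom.clrd.inj hv
        exact Or.inl (Or.inr (Or.inr ⟨f v, rfl⟩))
    · rintro x (h | ⟨v, hv⟩)
      · rcases h with ⟨v, hv⟩ | ⟨v, w', ha, hv⟩ | ⟨i, hi⟩ <;> simp_all
      · simp at hv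
    · rintro x c d (h | ⟨v, hv⟩) (h' | ⟨v', hv'⟩)
      · rcases h with ⟨v, hv⟩ | ⟨v, w', ha, hv⟩ | ⟨i, hi⟩ <;> simp_all
      · rcases h with ⟨v, hv⟩ | ⟨v, w', ha, hv⟩ | ⟨i, hi⟩ <;> simp_all
      · rcases h' with ⟨v, hv'⟩ | ⟨v, w', ha, hv'⟩ | ⟨i, hi⟩ <;> simp_all
      · obtain ⟨h1, h2⟩ := ColAtom.clrd.inj hv
        obtain ⟨h3, h4⟩ := ColAtom.clrd.inj hv'
        subst h2; subst h4
        rw [Sum.inl.inj (h1.symm.trans h3)]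
    · rintro x y c (h | ⟨v, hv⟩) hx hy
      · rcases h with ⟨v0, hv0⟩ | ⟨v, w', ha, hv⟩ | ⟨i, hi⟩
        · simp at hv0
        · obtain ⟨rfl, rfl⟩ := ColAtom.edge.inj hv
          rcases hx with (h' | ⟨v1, hv1⟩)
          · rcases h' with ⟨v1, hv1⟩ | ⟨v1, w1, _, hv1⟩ | ⟨i, hi⟩ <;> simp_all
          rcases hy with (h' | ⟨v2, hv2⟩)
          · rcases h' with ⟨v2, hv2⟩ | ⟨v2, w2, _, hv2⟩ | ⟨i, hi⟩ <;> simp_all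
          obtain ⟨h1, h2⟩ := ColAtom.clrd.inj hv1
          obtain ⟨h3, h4⟩ := ColAtom.clrd.inj hv2
          have e1 := Sum.inl.inj h1
          have e2 := Sum.inl.inj h3
          exact hf v w' ha (by rw [e1, e2]; exact Sum.inr.inj (h2.symm.trans h4))
        · simp at hi
      · simp at hv
  constructor
  · -- InjOn
    intro f hf g hg he
    funext v
    have h0 : ColAtom.clrd (Sum.inl v) (Sum.inr (f v)) ∈
        colData G k ∪ {a | ∃ v : V, a = ColAtom.clrd (.inl v) (.inr (f v))} :=
      Or.inr ⟨v, rfl⟩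
    have hm : ColAtom.clrd (Sum.inl v) (Sum.inr (f v)) ∈
        colData G k ∪ {a | ∃ v : V, a = ColAtom.clrd (.inl v) (.inr (g v))} := by
      have he' : colData G k ∪ {a | ∃ v : V, a = ColAtom.clrd (.inl v) (.inr (f v))} =
          colData G k ∪ {a | ∃ v : V, a = ColAtom.clrd (.inl v) (.inr (g v))} := he
      exact he' ▸ h0
    rcases hm with h | ⟨v', hv'⟩
    · rcases h with ⟨v1, hv1⟩ | ⟨v1, w1, _, hv1⟩ | ⟨i, hi⟩ <;> simp_all
    · obtain ⟨h1, h2⟩ := ColAtom.clrd.inj hv'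
      cases Sum.inl.inj h1
      exact Sum.inr.inj h2
  · -- SurjOn
    intro M hM
    obtain ⟨hvtx, hedge, hcol, hc1, hc2, hc3, hc4, hc5⟩ := hM
    have key : ∀ v : V, ∃ i : Fin k, ColAtom.clrd (Sum.inl v) (Sum.inr i) ∈ M := by
      intro v
      obtain ⟨c, hc⟩ := hc3 _ ((hvtx (Sum.inl v)).2 ⟨v, rfl⟩)
      obtain ⟨i, rfl⟩ := (hcol c).1 (hc2 _ _ hc)
      exact ⟨i, hc⟩
    choose f hfm using key
    refine ⟨f, ?_, ?_⟩
    · intro v w ha hne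
      exact hc5 (Sum.inl v) (Sum.inl w) (Sum.inr (f v))
        ((hedge _ _).2 ⟨v, w, ha, rfl, rfl⟩) (hfm v) (hne ▸ hfm w)
    · ext a
      simp only [Set.mem_union, Set.mem_setOf_eq]
      constructor
      · rintro (h | ⟨v, rfl⟩)
        · rcases h with ⟨v, rfl⟩ | ⟨v, w, ha, rfl⟩ | ⟨i, rfl⟩
          · exact (hvtx _).2 ⟨v, rfl⟩
          · exact (hedge _ _).2 ⟨v, w, ha, rfl, rfl⟩
          · exact (hcol _).2 ⟨i, rfl⟩
        · exact hfm v
      · intro ha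
        cases a with
        | vtx u => exact Or.inl (Or.inl (by obtain ⟨v, rfl⟩ := (hvtx u).1 ha; exact ⟨v, rfl⟩))
        | edge u w => exact Or.inl (Or.inr (Or.inl (by
            obtain ⟨v, v', h, rfl, rfl⟩ := (hedge u w).1 ha; exact ⟨v, v', h, rfl⟩)))
        | color u => exact Or.inl (Or.inr (Or.inr (by
            obtain ⟨i, rfl⟩ := (hcol u).1 ha; exact ⟨i, rfl⟩)))
        | clrd x c =>
          obtain ⟨v, rfl⟩ := (hvtx x).1 (hc1 _ _ ha)
          obtain ⟨i, rfl⟩ := (hcol c).1 (hc2 _ _ ha)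
          have : Sum.inr i = (Sum.inr (f v) : V ⊕ Fin k) := hc4 _ _ _ ha (hfm v)
          exact Or.inr ⟨v, by rw [this]⟩
end

section
/- Let G = (V,E) be a finite undirected graph and k a positive integer. (1) If W ⊆ V is a vertex cover of G with |W| ≤ k, then for every sequence w₁,…,wₖ enumerating all elements of W (repetitions allowed), the set M = D ∪ {vc(i, wᵢ) : i = 1,…,k} is a model of the vertex-cover data-program pair. (2) Conversely, if M is a model of the vertex-cover data-program pair, then W = {w ∈ V : vc(i,w) ∈ M for some i ∈ {1,…,k}} is a vertex cover of G with |W| ≤ k. -/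
/-- Ground atoms of the vertex-cover encoding.  The Herbrand universe consists
of the vertices (`Sum.inl v`) and the indices `1,…,k` (`Sum.inr i`,
`i : Fin k`). -/
inductive VCAtom (V : Type) (k : ℕ) where
  | vtx : V ⊕ Fin k → VCAtom V k
  | edge : V ⊕ Fin k → V ⊕ Fin k → VCAtom V k
  | index : V ⊕ Fin k → VCAtom V k
  | vc : V ⊕ Fin k → V ⊕ Fin k → VCAtom V k

/-- The data set `D_vc(G,k)`. -/
def vcData {V : Type} (G : SimpleGraph V) (k : ℕ) : Set (VCAtom V k) :=
  {a | (∃ v : V, a = .vtx (.inl v)) ∨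
       (∃ v w : V, G.Adj v w ∧ a = .edge (.inl v) (.inl w)) ∨
       (∃ i : Fin k, a = .index (.inr i))}

/-- `M` is a model of the data-program pair `(D_vc(G,k), P_vc)`: it satisfies
the closed-world completion of the data and all ground instances of the rules
(VC1)–(VC5), with e-atoms grounding to disjunctions over all constants. -/
def IsVCModel {V : Type} (G : SimpleGraph V) (k : ℕ)
    (M : Set (VCAtom V k)) : Prop :=
  -- closed-world completion of the data
  (∀ u, VCAtom.vtx u ∈ M ↔ ∃ v : V, u = .inl v) ∧
  (∀ u w, VCAtom.edge u w ∈ M ↔ ∃ v v' : V, G.Adj v v' ∧ u = .inl v ∧ w = .inl v') ∧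
  (∀ u, VCAtom.index u ∈ M ↔ ∃ i : Fin k, u = .inr i) ∧
  -- (VC1) vc(I,X) → vtx(X)
  (∀ i x, VCAtom.vc i x ∈ M → VCAtom.vtx x ∈ M) ∧
  -- (VC2) vc(I,X) → index(I)
  (∀ i x, VCAtom.vc i x ∈ M → VCAtom.index i ∈ M) ∧
  -- (VC3) index(I) → ∃X vc(I,X)
  (∀ i, VCAtom.index i ∈ M → ∃ x, VCAtom.vc i x ∈ M) ∧
  -- (VC4) vc(I,X) ∧ vc(I,Y) → X = Y
  (∀ i x y, VCAtom.vc i x ∈ M → VCAtom.vc i y ∈ M → x = y) ∧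
  -- (VC5) edge(X,Y) → ∃I vc(I,X) ∨ ∃J vc(J,Y)
  (∀ x y, VCAtom.edge x y ∈ M →
    (∃ i, VCAtom.vc i x ∈ M) ∨ (∃ j, VCAtom.vc j y ∈ M))

/-- Correctness of the vertex-cover encoding: (1) if `W` is a vertex cover of
`G` of size at most `k`, then for every sequence `w₁,…,wₖ` enumerating the
elements of `W` (repetitions allowed) the corresponding set of atoms is a
model; (2) conversely, every model yields a vertex cover of size at most `k`. -/
theorem stmt4 {V : Type} [Fintype V] (G : SimpleGraph V) (k : ℕ) (hk : 0 < k) :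
    -- (1)
    (∀ W : Set V, (∀ v w : V, G.Adj v w → v ∈ W ∨ w ∈ W) → W.ncard ≤ k →
      ∀ w : Fin k → V, Set.range w = W →
        IsVCModel G k (vcData G k ∪
          {a | ∃ i : Fin k, a = VCAtom.vc (.inr i) (.inl (w i))})) ∧
    -- (2)
    (∀ M : Set (VCAtom V k), IsVCModel G k M →
      (∀ v w : V, G.Adj v w →
        v ∈ {u : V | ∃ i : Fin k, VCAtom.vc (.inr i) (.inl u) ∈ M} ∨
        w ∈ {u : V | ∃ i : Fin k, VCAtom.vc (.inr i) (.inl u) ∈ M}) ∧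
      {u : V | ∃ i : Fin k, VCAtom.vc (.inr i) (.inl u) ∈ M}.ncard ≤ k) := by
  constructor
  · intro W hW hcard w hw
    refine ⟨?_, ?_, ?_, ?_, ?_, ?_, ?_, ?_⟩
    · intro u
      simp [vcData, Set.mem_union, Set.mem_setOf_eq]
    · intro u x
      simp only [Set.mem_union, Set.mem_setOf_eq, vcData]
      constructor
      · rintro ((⟨v, h⟩ | ⟨v, v', hadj, h⟩ | ⟨i, h⟩) | ⟨i, h⟩)
        · simp at h
        · obtain ⟨rfl, rfl⟩ : u = Sum.inl v ∧ x = Sum.inl v' := by simpa using h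
          exact ⟨v, v', hadj, rfl, rfl⟩
        · simp at h
        · simp at h
      · rintro ⟨v, v', hadj, rfl, rfl⟩
        exact Or.inl (Or.inr (Or.inl ⟨v, v', hadj, rfl⟩))
    · intro u
      simp [vcData, Set.mem_union, Set.mem_setOf_eq]
    · rintro i x (h | ⟨j, h⟩)
      · rcases h with ⟨v, h⟩ | ⟨v, v', _, h⟩ | ⟨j, h⟩ <;> simp at h
      · obtain ⟨rfl, rfl⟩ : i = Sum.inr j ∧ x = Sum.inl (w j) := by
          simpa using h
        exact Or.inl (Or.inl ⟨w j, rfl⟩)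
    · rintro i x (h | ⟨j, h⟩)
      · rcases h with ⟨v, h⟩ | ⟨v, v', _, h⟩ | ⟨j, h⟩ <;> simp at h
      · obtain ⟨rfl, rfl⟩ : i = Sum.inr j ∧ x = Sum.inl (w j) := by
          simpa using h
        exact Or.inl (Or.inr (Or.inr ⟨j, rfl⟩))
    · rintro i (h | ⟨j, h⟩)
      · rcases h with ⟨v, h⟩ | ⟨v, v', _, h⟩ | ⟨j, h⟩
        · simp at h
        · simp at h
        · obtain rfl : i = Sum.inr j := by simpa using h
          exact ⟨Sum.inl (w j), Or.inr ⟨j, rfl⟩⟩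
      · simp at h
    · rintro i x y (h | ⟨j, h⟩) (h' | ⟨j', h'⟩)
      · rcases h with ⟨v, h⟩ | ⟨v, v', _, h⟩ | ⟨j, h⟩ <;> simp at h
      · rcases h with ⟨v, h⟩ | ⟨v, v', _, h⟩ | ⟨jj, h⟩ <;> simp at h
      · rcases h' with ⟨v, h'⟩ | ⟨v, v', _, h'⟩ | ⟨jj, h'⟩ <;> simp at h'
      · obtain ⟨rfl, rfl⟩ : i = Sum.inr j ∧ x = Sum.inl (w j) := by simpa using h
        obtain ⟨hj, rfl⟩ : Sum.inr j = (Sum.inr j' : V ⊕ Fin k) ∧ y = Sum.inl (w j') := by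
          simpa using h'
        obtain rfl : j = j' := by simpa using hj
        rfl
    · rintro x y (h | ⟨j, h⟩)
      · rcases h with ⟨v, h⟩ | ⟨v, v', hadj, h⟩ | ⟨j, h⟩
        · simp at h
        · obtain ⟨rfl, rfl⟩ : x = Sum.inl v ∧ y = Sum.inl v' := by simpa using h
          rcases hW v v' hadj with hv | hv
          · rw [← hw] at hv
            obtain ⟨i, rfl⟩ := hv
            exact Or.inl ⟨Sum.inr i, Or.inr ⟨i, rfl⟩⟩
          · rw [← hw] at hv
            obtain ⟨i, rfl⟩ := hv
            exact Or.inr ⟨Sum.inr i, Or.inr ⟨i, rfl⟩⟩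
        · simp at h
      · simp at h
  · intro M hM
    obtain ⟨hvtx, hedge, hidx, h1, h2, h3, h4, h5⟩ := hM
    constructor
    · intro v v' hadj
      have he : VCAtom.edge (Sum.inl v) (Sum.inl v') ∈ M :=
        (hedge _ _).2 ⟨v, v', hadj, rfl, rfl⟩
      rcases h5 _ _ he with ⟨i, hi⟩ | ⟨i, hi⟩
      · obtain ⟨i₀, rfl⟩ := (hidx i).1 (h2 _ _ hi)
        exact Or.inl ⟨i₀, hi⟩
      · obtain ⟨i₀, rfl⟩ := (hidx i).1 (h2 _ _ hi)
        exact Or.inr ⟨i₀, hi⟩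
    · set S := {u : V | ∃ i : Fin k, VCAtom.vc (.inr i) (.inl u) ∈ M} with hS
      have hinj : ∃ f : S → Fin k, Function.Injective f := by
        choose f hf using fun u : S => u.2
        refine ⟨f, fun a b hab => ?_⟩
        have := h4 _ _ _ (hf a) (hab ▸ hf b)
        exact Subtype.ext (by simpa using this)
      obtain ⟨f, hf⟩ := hinj
      haveI : Finite S := Finite.of_injective f hf
      calc S.ncard = Nat.card S := Nat.card_coe_set_eq S ▸ rfl
        _ ≤ Nat.card (Fin k) := Nat.card_le_card_of_injective f hf
        _ = k := by simp
end

section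
/- Let n be a positive integer. A set of n board positions {(rᵢ,cᵢ) : i = 1,…,n} with rᵢ,cᵢ ∈ {1,…,n} is a solution to the n-queens problem (each row and each column contains exactly one queen, and no two queens lie on a common diagonal) if and only if M = D ∪ {q(rᵢ,cᵢ) : i = 1,…,n} is a model of the n-queens data-program pair; moreover this correspondence is a bijection between n-queens solutions and models. -/
/-- Ground atoms of the n-queens encoding; arithmetic atoms are interpreted by
actual integer arithmetic, so atoms are indexed by integers. -/
inductive NQAtom where
  | index : ℤ → NQAtom
  | q : ℤ → ℤ → NQAtom

/-- The data set `D_nq(n) = {index(i) : 1 ≤ i ≤ n}`. -/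
def nqData (n : ℕ) : Set NQAtom :=
  {a | ∃ i : ℤ, 1 ≤ i ∧ i ≤ n ∧ a = .index i}

/-- `M` is a model of the n-queens data-program pair `(D_nq(n), P_nq)`: it
satisfies the closed-world completion of the data and all ground instances of
the rules (nQ1)–(nQ7), with arithmetic interpreted by integer arithmetic. -/
def IsNQModel (n : ℕ) (M : Set NQAtom) : Prop :=
  -- closed-world completion of the data
  (∀ i : ℤ, NQAtom.index i ∈ M ↔ 1 ≤ i ∧ i ≤ n) ∧
  -- (nQ1) q(R,C) → index(R)
  (∀ r c : ℤ, NQAtom.q r c ∈ M → NQAtom.index r ∈ M) ∧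
  -- (nQ2) q(R,C) → index(C)
  (∀ r c : ℤ, NQAtom.q r c ∈ M → NQAtom.index c ∈ M) ∧
  -- (nQ3) index(R) → ∃C q(R,C)
  (∀ r : ℤ, NQAtom.index r ∈ M → ∃ c : ℤ, NQAtom.q r c ∈ M) ∧
  -- (nQ4) q(R,C1) ∧ q(R,C2) → C1 = C2
  (∀ r c₁ c₂ : ℤ, NQAtom.q r c₁ ∈ M → NQAtom.q r c₂ ∈ M → c₁ = c₂) ∧
  -- (nQ5) q(R1,C) ∧ q(R2,C) → R1 = R2
  (∀ r₁ r₂ c : ℤ, NQAtom.q r₁ c ∈ M → NQAtom.q r₂ c ∈ M → r₁ = r₂) ∧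
  -- (nQ6) q(R,C) ∧ q(R+I,C+I) → ⊥ for I ≥ 1
  (∀ r c i : ℤ, 1 ≤ i → NQAtom.q r c ∈ M → NQAtom.q (r + i) (c + i) ∈ M →
    False) ∧
  -- (nQ7) q(R,C) ∧ q(R+I,C−I) → ⊥ for I ≥ 1
  (∀ r c i : ℤ, 1 ≤ i → NQAtom.q r c ∈ M → NQAtom.q (r + i) (c - i) ∈ M →
    False)

/-- A set of board positions is a solution to the n-queens problem: all
positions lie on the board, each row and each column contains exactly one
queen, and no two queens lie on a common diagonal. -/
def IsNQSolution (n : ℕ) (S : Set (ℤ × ℤ)) : Prop :=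
  (∀ p ∈ S, 1 ≤ p.1 ∧ p.1 ≤ n ∧ 1 ≤ p.2 ∧ p.2 ≤ n) ∧
  (∀ r : ℤ, 1 ≤ r → r ≤ n → ∃! c : ℤ, (r, c) ∈ S) ∧
  (∀ c : ℤ, 1 ≤ c → c ≤ n → ∃! r : ℤ, (r, c) ∈ S) ∧
  (∀ p ∈ S, ∀ p' ∈ S, p ≠ p' → |p.1 - p'.1| ≠ |p.2 - p'.2|)

def img (n : ℕ) (S : Set (ℤ × ℤ)) : Set NQAtom :=
  nqData n ∪ {a | ∃ p ∈ S, a = NQAtom.q p.1 p.2}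

lemma q_mem_img {n : ℕ} {S : Set (ℤ × ℤ)} {r c : ℤ} :
    NQAtom.q r c ∈ img n S ↔ (r, c) ∈ S := by
  constructor
  · rintro (⟨i, -, -, h⟩ | ⟨p, hp, h⟩)
    · exact absurd h (by simp)
    · injection h with h1 h2
      rw [h1, h2, Prod.mk.eta]; exact hp
  · intro h; exact Or.inr ⟨(r, c), h, rfl⟩

lemma index_mem_img {n : ℕ} {S : Set (ℤ × ℤ)} {i : ℤ} :
    NQAtom.index i ∈ img n S ↔ 1 ≤ i ∧ i ≤ n := by
  constructor
  · rintro (⟨j, h1, h2, h⟩ | ⟨p, hp, h⟩)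
    · injection h with h'; subst h'; exact ⟨h1, h2⟩
    · exact absurd h (by simp)
  · intro h; exact Or.inl ⟨i, h.1, h.2, rfl⟩

lemma no_diag_lt {n : ℕ} {M : Set NQAtom} (hM : IsNQModel n M) {r c r' c' : ℤ}
    (h : NQAtom.q r c ∈ M) (h' : NQAtom.q r' c' ∈ M) (hlt : r < r')
    (hab : |r - r'| = |c - c'|) : False := by
  obtain ⟨-, -, -, -, -, -, h6, h7⟩ := hM
  have habs : |r - r'| = r' - r := by
    rw [abs_sub_comm]; exact abs_of_pos (by omega)
  rw [habs] at hab
  rcases (abs_eq (by omega)).mp hab.symm with hc | hc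
  · exact h7 r c (r' - r) (by omega)
      h (by rw [show r + (r' - r) = r' by ring, show c - (r' - r) = c' by omega]; exact h')
  · exact h6 r c (r' - r) (by omega)
      h (by rw [show r + (r' - r) = r' by ring, show c + (r' - r) = c' by omega]; exact h')

lemma no_diag {n : ℕ} {M : Set NQAtom} (hM : IsNQModel n M) {r c r' c' : ℤ}
    (h : NQAtom.q r c ∈ M) (h' : NQAtom.q r' c' ∈ M) (hne : (r, c) ≠ (r', c')) :
    |r - r'| ≠ |c - c'| := by
  intro hab
  rcases lt_trichotomy r r' with hlt | heq | hlt
  · exact no_diag_lt hM h h' hlt hab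
  · subst heq
    have := hM.2.2.2.2.1 r c c' h h'
    exact hne (by rw [this])
  · exact no_diag_lt hM h' h hlt (by rw [abs_sub_comm c' c, abs_sub_comm r' r]; exact hab)

lemma model_of_sol {n : ℕ} {S : Set (ℤ × ℤ)} (hS : IsNQSolution n S) :
    IsNQModel n (img n S) := by
  obtain ⟨hb, hrow, hcol, hdiag⟩ := hS
  have hq6 : ∀ (r c i : ℤ), 1 ≤ i → NQAtom.q r c ∈ img n S →
      NQAtom.q (r + i) (c + i) ∈ img n S → False := by
    intro r c i hi h1 h2
    have hm1 := q_mem_img.mp h1; have hm2 := q_mem_img.mp h2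
    have hne : ((r, c) : ℤ × ℤ) ≠ (r + i, c + i) := by
      intro h; have := congrArg Prod.fst h; simp at this; omega
    have := hdiag _ hm1 _ hm2 hne
    apply this
    simp only []
    rw [show r - (r + i) = -i by ring, show c - (c + i) = -i by ring]
  have hq7 : ∀ (r c i : ℤ), 1 ≤ i → NQAtom.q r c ∈ img n S →
      NQAtom.q (r + i) (c - i) ∈ img n S → False := by
    intro r c i hi h1 h2
    have hm1 := q_mem_img.mp h1; have hm2 := q_mem_img.mp h2
    have hne : ((r, c) : ℤ × ℤ) ≠ (r + i, c - i) := by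
      intro h; have := congrArg Prod.fst h; simp at this; omega
    have := hdiag _ hm1 _ hm2 hne
    apply this
    simp only []
    rw [show r - (r + i) = -i by ring, show c - (c - i) = i by ring, abs_neg]
  refine ⟨fun i => index_mem_img, ?_, ?_, ?_, ?_, ?_, hq6, hq7⟩
  · intro r c h
    have := hb _ (q_mem_img.mp h)
    exact index_mem_img.mpr ⟨this.1, this.2.1⟩
  · intro r c h
    have := hb _ (q_mem_img.mp h)
    exact index_mem_img.mpr ⟨this.2.2.1, this.2.2.2⟩
  · intro r h
    obtain ⟨h1, h2⟩ := index_mem_img.mp h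
    obtain ⟨c, hc, -⟩ := hrow r h1 h2
    exact ⟨c, q_mem_img.mpr hc⟩
  · intro r c₁ c₂ h1 h2
    have hm1 := q_mem_img.mp h1; have hm2 := q_mem_img.mp h2
    have hr := hb _ hm1
    obtain ⟨c, hc, hu⟩ := hrow r hr.1 hr.2.1
    rw [hu c₁ hm1, hu c₂ hm2]
  · intro r₁ r₂ c h1 h2
    have hm1 := q_mem_img.mp h1; have hm2 := q_mem_img.mp h2
    have hc := hb _ hm1
    obtain ⟨r, hr, hu⟩ := hcol c hc.2.2.1 hc.2.2.2
    rw [hu r₁ hm1, hu r₂ hm2]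

lemma sol_of_model {n : ℕ} {M : Set NQAtom} (hM : IsNQModel n M) :
    IsNQSolution n {p : ℤ × ℤ | NQAtom.q p.1 p.2 ∈ M} := by
  obtain ⟨hidx, h1, h2, h3, h4, h5, h6, h7⟩ := hM
  refine ⟨?_, ?_, ?_, ?_⟩
  · intro p hp
    have hr := (hidx p.1).mp (h1 _ _ hp)
    have hc := (hidx p.2).mp (h2 _ _ hp)
    exact ⟨hr.1, hr.2, hc.1, hc.2⟩
  · intro r hr1 hr2
    obtain ⟨c, hc⟩ := h3 r ((hidx r).mpr ⟨hr1, hr2⟩)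
    exact ⟨c, hc, fun c' hc' => h4 r c' c hc' hc⟩
  · intro c hc1 hc2
    -- pigeonhole: each row has a queen, columns are distinct, so every column is hit
    have hex : ∀ r ∈ Finset.Icc (1 : ℤ) (n : ℤ), ∃ c', NQAtom.q r c' ∈ M := by
      intro r hr
      rw [Finset.mem_Icc] at hr
      exact h3 r ((hidx r).mpr hr)
    classical
    set f : ∀ r ∈ Finset.Icc (1 : ℤ) (n : ℤ), ℤ := fun r hr => (hex r hr).choose with hf
    have hfq : ∀ r hr, NQAtom.q r (f r hr) ∈ M := fun r hr => (hex r hr).choose_spec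
    have hft : ∀ r hr, f r hr ∈ Finset.Icc (1 : ℤ) (n : ℤ) := by
      intro r hr
      rw [Finset.mem_Icc]
      exact (hidx _).mp (h2 _ _ (hfq r hr))
    have hinj : ∀ r₁ r₂ hr₁ hr₂, f r₁ hr₁ = f r₂ hr₂ → r₁ = r₂ := by
      intro r₁ r₂ hr₁ hr₂ he
      exact h5 r₁ r₂ _ (hfq r₁ hr₁) (he ▸ hfq r₂ hr₂)
    obtain ⟨r, hr, hrc⟩ := Finset.surj_on_of_inj_on_of_card_le f hft hinj le_rfl
      c (Finset.mem_Icc.mpr ⟨hc1, hc2⟩)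
    refine ⟨r, ?_, fun r' hr' => h5 r' r c hr' ?_⟩
    · show NQAtom.q r c ∈ M
      rw [hrc]; exact hfq r hr
    · show NQAtom.q r c ∈ M
      rw [hrc]; exact hfq r hr
  · intro p hp p' hp' hne
    exact no_diag ⟨hidx, h1, h2, h3, h4, h5, h6, h7⟩ hp hp'
      (by simpa [Prod.ext_iff] using hne)


/-- A set of positions is an n-queens solution if and only if the
corresponding set of atoms is a model of `(D_nq(n), P_nq)`; moreover the
correspondence is a bijection between solutions and models. -/
theorem stmt6 (n : ℕ) (hn : 0 < n) :
    (∀ S : Set (ℤ × ℤ), IsNQSolution n S ↔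
      IsNQModel n (nqData n ∪ {a | ∃ p ∈ S, a = NQAtom.q p.1 p.2})) ∧
    Set.BijOn (fun S : Set (ℤ × ℤ) =>
        nqData n ∪ {a | ∃ p ∈ S, a = NQAtom.q p.1 p.2})
      {S | IsNQSolution n S} {M | IsNQModel n M} := by
  have himg : ∀ S : Set (ℤ × ℤ),
      (nqData n ∪ {a | ∃ p ∈ S, a = NQAtom.q p.1 p.2}) = img n S := fun S => rfl
  have key : ∀ S : Set (ℤ × ℤ), IsNQSolution n S ↔ IsNQModel n (img n S) := by
    intro S
    constructor
    · exact model_of_sol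
    · intro hM
      have hSeq : S = {p : ℤ × ℤ | NQAtom.q p.1 p.2 ∈ img n S} := by
        ext p
        simp only [Set.mem_setOf_eq, q_mem_img, Prod.mk.eta]
      rw [hSeq]
      exact sol_of_model hM
  refine ⟨fun S => by rw [himg]; exact key S, ?_, ?_, ?_⟩
  · intro S hS
    simp only [Set.mem_setOf_eq] at hS ⊢
    rw [himg]
    exact (key S).mp hS
  · intro S hS S' hS' he
    simp only [himg] at he
    ext p
    have h1 : (p.1, p.2) ∈ S ↔ NQAtom.q p.1 p.2 ∈ img n S := q_mem_img.symm
    have h2 : (p.1, p.2) ∈ S' ↔ NQAtom.q p.1 p.2 ∈ img n S' := q_mem_img.symm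
    rw [Prod.mk.eta] at h1 h2
    rw [h1, h2, he]
  · intro M hM
    simp only [Set.mem_setOf_eq] at hM
    set S : Set (ℤ × ℤ) := {p : ℤ × ℤ | NQAtom.q p.1 p.2 ∈ M} with hS
    have heq : (nqData n ∪ {a | ∃ p ∈ S, a = NQAtom.q p.1 p.2}) = M := by
      rw [himg]
      ext a
      cases a with
      | index i =>
        rw [index_mem_img, hM.1]
      | q r c =>
        rw [q_mem_img]
        exact Iff.rfl
    exact ⟨S, sol_of_model hM, heq⟩
end

section
/- Let G = (V,E) be a finite directed graph without loops and with k = |V| vertices. The transitive-closure data-program pair (D_tc(G), P_tc) has a unique model, consisting of (1) all atoms in D_tc(G), (2) all atoms path(x,y,z,i) with 1 ≤ i ≤ k such that there is a directed walk in G from x to y of length i whose last-but-one vertex is z, and (3) all atoms tc(x,y) such that there is a directed path of positive length from x to y in G. -/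
/-- Ground atoms of the transitive-closure encoding.  The Herbrand universe
consists of the vertices (`Sum.inl v`) and integers (`Sum.inr i`); only the
indices `1,…,k` (where `k = |V|`) belong to the data. -/
inductive TCAtom (V : Type) where
  | vtx : V ⊕ ℕ → TCAtom V
  | edge : V ⊕ ℕ → V ⊕ ℕ → TCAtom V
  | index : V ⊕ ℕ → TCAtom V
  | path : V ⊕ ℕ → V ⊕ ℕ → V ⊕ ℕ → V ⊕ ℕ → TCAtom V
  | tc : V ⊕ ℕ → V ⊕ ℕ → TCAtom V

/-- There is a directed walk in `(V,E)` from `x` to `y` of length `i ≥ 1`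
whose last-but-one vertex is `z`. -/
def HasWalkVia {V : Type} (E : V → V → Prop) (x y z : V) (i : ℕ) : Prop :=
  1 ≤ i ∧ ∃ u : ℕ → V, u 0 = x ∧ u i = y ∧ u (i - 1) = z ∧
    ∀ j < i, E (u j) (u (j + 1))

/-- The data set `D_tc(G)` for `G = (V,E)` with `k = |V|`. -/
def tcData {V : Type} (E : V → V → Prop) (k : ℕ) : Set (TCAtom V) :=
  {a | (∃ v : V, a = .vtx (.inl v)) ∨
       (∃ v w : V, E v w ∧ a = .edge (.inl v) (.inl w)) ∨
       (∃ i : ℕ, 1 ≤ i ∧ i ≤ k ∧ a = .index (.inr i))}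

/-- `M` is a model of the data-program pair `(D_tc(G), P_tc)`: it satisfies
the closed-world completion of the data and all ground instances of the rules
(TC1)–(TC14); arithmetic atoms `I+1` are interpreted by integer addition and
only instances with index values in `{1,…,k}` exist. -/
def IsTCModel {V : Type} (E : V → V → Prop) (k : ℕ) (M : Set (TCAtom V)) :
    Prop :=
  -- closed-world completion of the data
  (∀ u, TCAtom.vtx u ∈ M ↔ ∃ v : V, u = .inl v) ∧
  (∀ u w, TCAtom.edge u w ∈ M ↔ ∃ v v' : V, E v v' ∧ u = .inl v ∧ w = .inl v') ∧
  (∀ u, TCAtom.index u ∈ M ↔ ∃ i : ℕ, 1 ≤ i ∧ i ≤ k ∧ u = .inr i) ∧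
  -- (TC1)–(TC4) path(X,Y,Z,I) → vtx(X), vtx(Y), vtx(Z), index(I)
  (∀ x y z i, TCAtom.path x y z i ∈ M → TCAtom.vtx x ∈ M) ∧
  (∀ x y z i, TCAtom.path x y z i ∈ M → TCAtom.vtx y ∈ M) ∧
  (∀ x y z i, TCAtom.path x y z i ∈ M → TCAtom.vtx z ∈ M) ∧
  (∀ x y z i, TCAtom.path x y z i ∈ M → TCAtom.index i ∈ M) ∧
  -- (TC5)–(TC6) tc(X,Y) → vtx(X), vtx(Y)
  (∀ x y, TCAtom.tc x y ∈ M → TCAtom.vtx x ∈ M) ∧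
  (∀ x y, TCAtom.tc x y ∈ M → TCAtom.vtx y ∈ M) ∧
  -- (TC7) path(X,Y,X,1) → edge(X,Y)
  (∀ x y, TCAtom.path x y x (.inr 1) ∈ M → TCAtom.edge x y ∈ M) ∧
  -- (TC8) edge(X,Y) → path(X,Y,X,1)
  (∀ x y, TCAtom.edge x y ∈ M → TCAtom.path x y x (.inr 1) ∈ M) ∧
  -- (TC9) path(X,Y,Z,1) → X = Z
  (∀ x y z, TCAtom.path x y z (.inr 1) ∈ M → x = z) ∧
  -- (TC10) path(X,Y,Z,I+1) → ∃W path(X,Z,W,I)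
  (∀ x y z (i : ℕ), 1 ≤ i → i + 1 ≤ k →
    TCAtom.path x y z (.inr (i + 1)) ∈ M →
      ∃ w, TCAtom.path x z w (.inr i) ∈ M) ∧
  -- (TC11) path(X,Y,Z,I+1) → edge(Z,Y)
  (∀ x y z (i : ℕ), 1 ≤ i → i + 1 ≤ k →
    TCAtom.path x y z (.inr (i + 1)) ∈ M → TCAtom.edge z y ∈ M) ∧
  -- (TC12) path(X,Z,W,I) ∧ edge(Z,Y) → path(X,Y,Z,I+1)
  (∀ x y z w (i : ℕ), 1 ≤ i → i + 1 ≤ k →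
    TCAtom.path x z w (.inr i) ∈ M → TCAtom.edge z y ∈ M →
      TCAtom.path x y z (.inr (i + 1)) ∈ M) ∧
  -- (TC13) tc(X,Y) → ∃Z,I path(X,Y,Z,I)
  (∀ x y, TCAtom.tc x y ∈ M → ∃ z i, TCAtom.path x y z i ∈ M) ∧
  -- (TC14) path(X,Y,Z,I) → tc(X,Y)
  (∀ x y z i, TCAtom.path x y z i ∈ M → TCAtom.tc x y ∈ M)

/-- The intended model: the data atoms, the `path` atoms corresponding to
directed walks of length `1,…,k` with their last-but-one vertex, and the `tc`
atoms corresponding to directed paths of positive length. -/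
def tcIntendedModel {V : Type} (E : V → V → Prop) (k : ℕ) : Set (TCAtom V) :=
  tcData E k ∪
  {a | ∃ (x y z : V) (i : ℕ), 1 ≤ i ∧ i ≤ k ∧ HasWalkVia E x y z i ∧
    a = .path (.inl x) (.inl y) (.inl z) (.inr i)} ∪
  {a | ∃ x y : V, Relation.TransGen E x y ∧ a = .tc (.inl x) (.inl y)}

section walkAux
variable {V : Type} {E : V → V → Prop}

lemma hwv_one {x y z : V} : HasWalkVia E x y z 1 ↔ E x y ∧ z = x := by
  constructor
  · rintro ⟨-, u, h0, h1, hz, he⟩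
    refine ⟨?_, ?_⟩
    · have := he 0 one_pos; rwa [h0, h1] at this
    · simp only [Nat.sub_self] at hz; rw [← hz, h0]
  · rintro ⟨hxy, rfl⟩
    refine ⟨le_refl 1, fun j => if j = 0 then z else y, by simp, by simp, by simp, ?_⟩
    intro j hj
    interval_cases j
    simpa using hxy

lemma hwv_succ {x y z w : V} {i : ℕ} (h : HasWalkVia E x z w i) (he : E z y) :
    HasWalkVia E x y z (i + 1) := by
  obtain ⟨hi, u, h0, h1, hz, hstep⟩ := h
  refine ⟨by omega, fun j => if j ≤ i then u j else y, ?_, ?_, ?_, ?_⟩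
  · simp [h0]
  · simp
  · simpa using h1
  · intro j hj
    beta_reduce
    rcases lt_or_eq_of_le (Nat.lt_succ_iff.mp hj) with hji | rfl
    · rw [if_pos hji.le, if_pos (Nat.succ_le_of_lt hji)]
      exact hstep j hji
    · rw [if_pos le_rfl, if_neg (by omega), h1]
      exact he

lemma hwv_pred {x y z : V} {i : ℕ} (hi : 1 ≤ i)
    (h : HasWalkVia E x y z (i + 1)) :
    (∃ w, HasWalkVia E x z w i) ∧ E z y := by
  obtain ⟨-, u, h0, h1, hz, hstep⟩ := h
  have hui : u i = z := by simpa using hz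
  refine ⟨⟨u (i - 1), hi, u, h0, hui, rfl, fun j hj => hstep j (by omega)⟩, ?_⟩
  rw [← hui, ← h1]
  exact hstep i (by omega)

lemma nwalk_transGen {u : ℕ → V} :
    ∀ i, 1 ≤ i → (∀ j < i, E (u j) (u (j + 1))) → Relation.TransGen E (u 0) (u i)
  | 0, h, _ => absurd h (by omega)
  | 1, _, hstep => Relation.TransGen.single (hstep 0 Nat.one_pos)
  | (n + 2), _, hstep =>
      (nwalk_transGen (n + 1) (by omega) (fun j hj => hstep j (by omega))).tail
        (hstep (n + 1) (by omega))

lemma hwv_transGen {x y z : V} {i : ℕ} (h : HasWalkVia E x y z i) :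
    Relation.TransGen E x y := by
  obtain ⟨h1, u, h0, h1', -, hstep⟩ := h
  have := nwalk_transGen (E := E) (u := u) i h1 hstep
  rwa [h0, h1'] at this

lemma transGen_hwv {x y : V} (h : Relation.TransGen E x y) :
    ∃ i z, HasWalkVia E x y z i := by
  induction h with
  | single hxy => exact ⟨1, x, hwv_one.mpr ⟨hxy, rfl⟩⟩
  | tail _ hbc IH =>
    obtain ⟨i, z, hw⟩ := IH
    exact ⟨i + 1, _, hwv_succ hw hbc⟩

lemma hwv_shorten [Fintype V] {x y : V} {i : ℕ}
    (h : ∃ z, HasWalkVia E x y z i) :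
    ∃ i' z', i' ≤ Fintype.card V ∧ HasWalkVia E x y z' i' := by
  induction i using Nat.strong_induction_on with
  | _ i IH =>
    obtain ⟨z, hz⟩ := h
    by_cases hk : i ≤ Fintype.card V
    · exact ⟨i, z, hk, hz⟩
    · obtain ⟨-, u, hu0, hui, -, hstep⟩ := hz
      push_neg at hk
      obtain ⟨a0, b0, hab, huab⟩ :=
        Fintype.exists_ne_map_eq_of_card_lt (fun j : Fin i => u j) (by simpa using hk)
      obtain ⟨a, b, hlt, hbi, hu⟩ : ∃ a b : ℕ, a < b ∧ b < i ∧ u a = u b := by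
        rcases lt_or_gt_of_ne (Fin.val_ne_of_ne hab) with h' | h'
        · exact ⟨a0, b0, h', b0.isLt, huab⟩
        · exact ⟨b0, a0, h', a0.isLt, huab.symm⟩
      refine IH (i - (b - a)) (by omega)
        ⟨_, by omega, (fun j => if j ≤ a then u j else u (j + (b - a))), ?_, ?_, rfl, ?_⟩
      · beta_reduce
        rw [if_pos (Nat.zero_le a), hu0]
      · beta_reduce
        rw [if_neg (by omega), show i - (b - a) + (b - a) = i by omega, hui]
      · intro j hj
        beta_reduce
        rcases lt_trichotomy j a with hja | rfl | hja
        · rw [if_pos hja.le, if_pos (by omega)]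
          exact hstep j (by omega)
        · rw [if_pos le_rfl, if_neg (by omega), hu, show j + 1 + (b - j) = b + 1 by omega]
          exact hstep b (by omega)
        · rw [if_neg (by omega), if_neg (by omega),
            show j + 1 + (b - a) = j + (b - a) + 1 by omega]
          exact hstep (j + (b - a)) (by omega)

end walkAux

section memAux
variable {V : Type} {E : V → V → Prop} {k : ℕ}

lemma mem_vtx {u : V ⊕ ℕ} :
    TCAtom.vtx u ∈ tcIntendedModel E k ↔ ∃ v : V, u = Sum.inl v := by
  simp [tcIntendedModel, tcData, Set.mem_union, Set.mem_setOf_eq, eq_comm]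

lemma mem_edge {u w : V ⊕ ℕ} :
    TCAtom.edge u w ∈ tcIntendedModel E k ↔
      ∃ v v' : V, E v v' ∧ u = Sum.inl v ∧ w = Sum.inl v' := by
  simp [tcIntendedModel, tcData, Set.mem_union, Set.mem_setOf_eq]

lemma mem_index {u : V ⊕ ℕ} :
    TCAtom.index u ∈ tcIntendedModel E k ↔ ∃ i : ℕ, 1 ≤ i ∧ i ≤ k ∧ u = Sum.inr i := by
  simp [tcIntendedModel, tcData, Set.mem_union, Set.mem_setOf_eq]

lemma mem_path {a b c d : V ⊕ ℕ} :
    TCAtom.path a b c d ∈ tcIntendedModel E k ↔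
      ∃ (x y z : V) (i : ℕ), i ≤ k ∧ HasWalkVia E x y z i ∧
        a = Sum.inl x ∧ b = Sum.inl y ∧ c = Sum.inl z ∧ d = Sum.inr i := by
  constructor
  · intro h
    simp only [tcIntendedModel, Set.mem_union, Set.mem_setOf_eq] at h
    rcases h with (h | h) | h
    · simp [tcData] at h
    · obtain ⟨x, y, z, i, -, hik, hw, heq⟩ := h
      cases heq
      exact ⟨x, y, z, i, hik, hw, rfl, rfl, rfl, rfl⟩
    · obtain ⟨x, y, -, heq⟩ := h; cases heq
  · rintro ⟨x, y, z, i, hik, hw, rfl, rfl, rfl, rfl⟩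
    exact Or.inl (Or.inr ⟨x, y, z, i, hw.1, hik, hw, rfl⟩)

lemma mem_tc {a b : V ⊕ ℕ} :
    TCAtom.tc a b ∈ tcIntendedModel E k ↔
      ∃ x y : V, Relation.TransGen E x y ∧ a = Sum.inl x ∧ b = Sum.inl y := by
  constructor
  · intro h
    simp only [tcIntendedModel, Set.mem_union, Set.mem_setOf_eq] at h
    rcases h with (h | h) | h
    · simp [tcData] at h
    · obtain ⟨x, y, z, i, -, -, -, heq⟩ := h; cases heq
    · obtain ⟨x, y, ht, heq⟩ := h
      cases heq
      exact ⟨x, y, ht, rfl, rfl⟩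
  · rintro ⟨x, y, ht, rfl, rfl⟩
    exact Or.inr ⟨x, y, ht, rfl⟩

end memAux

/-- For a finite loop-free directed graph `G = (V,E)` with `k = |V|`, the
transitive-closure data-program pair has a unique model, which is the
intended model described above. -/
theorem stmt7 {V : Type} [Fintype V] (E : V → V → Prop)
    (hloop : ∀ v, ¬ E v v) :
    IsTCModel E (Fintype.card V) (tcIntendedModel E (Fintype.card V)) ∧
    ∀ M : Set (TCAtom V), IsTCModel E (Fintype.card V) M →
      M = tcIntendedModel E (Fintype.card V) := by
  set k := Fintype.card V with hkdef
  constructor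
  · refine ⟨fun u => mem_vtx, fun u w => mem_edge, fun u => mem_index,
      ?_, ?_, ?_, ?_, ?_, ?_, ?_, ?_, ?_, ?_, ?_, ?_, ?_, ?_⟩
    · -- TC1
      intro x y z i h
      obtain ⟨x', y', z', i', -, -, rfl, -, -, -⟩ := mem_path.mp h
      exact mem_vtx.mpr ⟨x', rfl⟩
    · -- TC2
      intro x y z i h
      obtain ⟨x', y', z', i', -, -, -, rfl, -, -⟩ := mem_path.mp h
      exact mem_vtx.mpr ⟨y', rfl⟩
    · -- TC3
      intro x y z i h
      obtain ⟨x', y', z', i', -, -, -, -, rfl, -⟩ := mem_path.mp h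
      exact mem_vtx.mpr ⟨z', rfl⟩
    · -- TC4
      intro x y z i h
      obtain ⟨x', y', z', i', hik, hw, -, -, -, rfl⟩ := mem_path.mp h
      exact mem_index.mpr ⟨i', hw.1, hik, rfl⟩
    · -- TC5
      intro x y h
      obtain ⟨x', y', -, rfl, -⟩ := mem_tc.mp h
      exact mem_vtx.mpr ⟨x', rfl⟩
    · -- TC6
      intro x y h
      obtain ⟨x', y', -, -, rfl⟩ := mem_tc.mp h
      exact mem_vtx.mpr ⟨y', rfl⟩
    · -- TC7
      intro x y h
      obtain ⟨x', y', z', i', -, hw, rfl, rfl, -, hd⟩ := mem_path.mp h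
      obtain rfl : i' = 1 := (Sum.inr.inj hd.symm)
      exact mem_edge.mpr ⟨x', y', (hwv_one.mp hw).1, rfl, rfl⟩
    · -- TC8
      intro x y h
      obtain ⟨v, v', hE, rfl, rfl⟩ := mem_edge.mp h
      have hk1 : 1 ≤ k := Fintype.card_pos_iff.mpr ⟨v⟩
      exact mem_path.mpr ⟨v, v', v, 1, hk1, hwv_one.mpr ⟨hE, rfl⟩, rfl, rfl, rfl, rfl⟩
    · -- TC9
      intro x y z h
      obtain ⟨x', y', z', i', -, hw, rfl, -, rfl, hd⟩ := mem_path.mp h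
      obtain rfl : i' = 1 := (Sum.inr.inj hd.symm)
      rw [(hwv_one.mp hw).2]
    · -- TC10
      intro x y z i hi hik h
      obtain ⟨x', y', z', i', -, hw, rfl, rfl, rfl, hd⟩ := mem_path.mp h
      obtain rfl : i' = i + 1 := (Sum.inr.inj hd.symm)
      obtain ⟨⟨w, hww⟩, -⟩ := hwv_pred hi hw
      exact ⟨Sum.inl w, mem_path.mpr ⟨x', z', w, i, by omega, hww, rfl, rfl, rfl, rfl⟩⟩
    · -- TC11
      intro x y z i hi hik h
      obtain ⟨x', y', z', i', -, hw, rfl, rfl, rfl, hd⟩ := mem_path.mp h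
      obtain rfl : i' = i + 1 := (Sum.inr.inj hd.symm)
      exact mem_edge.mpr ⟨z', y', (hwv_pred hi hw).2, rfl, rfl⟩
    · -- TC12
      intro x y z w i hi hik hp he
      obtain ⟨x', z1, w', i', -, hw, rfl, rfl, rfl, hd⟩ := mem_path.mp hp
      rw [show i' = i from Sum.inr.inj hd.symm] at hw
      obtain ⟨v, v', hE, hv, rfl⟩ := mem_edge.mp he
      obtain rfl : z1 = v := Sum.inl.inj hv
      exact mem_path.mpr ⟨x', v', z1, i + 1, hik, hwv_succ hw hE, rfl, rfl, rfl, rfl⟩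
    · -- TC13
      intro x y h
      obtain ⟨x', y', ht, rfl, rfl⟩ := mem_tc.mp h
      obtain ⟨i, z, hw⟩ := transGen_hwv ht
      obtain ⟨i', z', hik, hw'⟩ := hwv_shorten ⟨z, hw⟩
      exact ⟨Sum.inl z', Sum.inr i',
        mem_path.mpr ⟨x', y', z', i', hik, hw', rfl, rfl, rfl, rfl⟩⟩
    · -- TC14
      intro x y z i h
      obtain ⟨x', y', z', i', -, hw, rfl, rfl, -, -⟩ := mem_path.mp h
      exact mem_tc.mpr ⟨x', y', hwv_transGen hw, rfl, rfl⟩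
  · -- uniqueness
    intro M hM
    obtain ⟨c1, c2, c3, t1, t2, t3, t4, t5, t6, t7, t8, t9, t10, t11, t12, t13, t14⟩ := hM
    -- (A) every walk atom is in M
    have A : ∀ i, ∀ x y z : V, i ≤ k → HasWalkVia E x y z i →
        TCAtom.path (.inl x) (.inl y) (.inl z) (.inr i) ∈ M := by
      intro i
      induction i with
      | zero => intro x y z _ hw; exact absurd hw.1 (by omega)
      | succ n IH =>
        intro x y z hik hw
        rcases Nat.eq_zero_or_pos n with rfl | hn
        · obtain ⟨hE, rfl⟩ := hwv_one.mp hw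
          exact t8 _ _ ((c2 _ _).mpr ⟨z, y, hE, rfl, rfl⟩)
        · obtain ⟨⟨w, hww⟩, hE⟩ := hwv_pred hn hw
          exact t12 _ _ _ _ n hn hik (IH x z w (by omega) hww)
            ((c2 _ _).mpr ⟨z, y, hE, rfl, rfl⟩)
    -- shape of path atoms in M
    have C : ∀ a b c d, TCAtom.path a b c d ∈ M →
        ∃ (x y z : V) (i : ℕ), 1 ≤ i ∧ i ≤ k ∧
          a = Sum.inl x ∧ b = Sum.inl y ∧ c = Sum.inl z ∧ d = Sum.inr i := by
      intro a b c d h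
      obtain ⟨x, rfl⟩ := (c1 a).mp (t1 _ _ _ _ h)
      obtain ⟨y, rfl⟩ := (c1 b).mp (t2 _ _ _ _ h)
      obtain ⟨z, rfl⟩ := (c1 c).mp (t3 _ _ _ _ h)
      obtain ⟨i, hi1, hik, rfl⟩ := (c3 d).mp (t4 _ _ _ _ h)
      exact ⟨x, y, z, i, hi1, hik, rfl, rfl, rfl, rfl⟩
    -- (B) path atoms in M are walk atoms
    have B : ∀ i, ∀ x y z : V, 1 ≤ i → i ≤ k →
        TCAtom.path (.inl x) (.inl y) (.inl z) (.inr i) ∈ M →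
        HasWalkVia E x y z i := by
      intro i
      induction i with
      | zero => intro x y z h1 _ _; exact absurd h1 (by omega)
      | succ n IH =>
        intro x y z _ hik hp
        rcases Nat.eq_zero_or_pos n with rfl | hn
        · obtain rfl : x = z := Sum.inl.inj (t9 _ _ _ hp)
          obtain ⟨v, v', hE, hv, hv'⟩ := (c2 _ _).mp (t7 _ _ hp)
          obtain rfl : x = v := Sum.inl.inj hv
          obtain rfl : y = v' := Sum.inl.inj hv'
          exact hwv_one.mpr ⟨hE, rfl⟩
        · obtain ⟨w, hw⟩ := t10 _ _ _ n hn hik hp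
          obtain ⟨x1, z1, w', n', -, -, hx, hz, rfl, hd⟩ := C _ _ _ _ hw
          obtain rfl : x = x1 := Sum.inl.inj hx
          obtain rfl : z = z1 := Sum.inl.inj hz
          obtain rfl : n = n' := Sum.inr.inj hd
          have hwalk := IH x z w' hn (by omega) hw
          obtain ⟨v, v', hE, hv, hv'⟩ := (c2 _ _).mp (t11 _ _ _ n hn hik hp)
          obtain rfl : z = v := Sum.inl.inj hv
          obtain rfl : y = v' := Sum.inl.inj hv'
          exact hwv_succ hwalk hE
    ext a
    cases a with
    | vtx u => rw [c1, mem_vtx]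
    | edge u w => rw [c2, mem_edge]
    | index u => rw [c3, mem_index]
    | path a b c d =>
      constructor
      · intro h
        obtain ⟨x, y, z, i, hi1, hik, rfl, rfl, rfl, rfl⟩ := C _ _ _ _ h
        exact mem_path.mpr ⟨x, y, z, i, hik, B i x y z hi1 hik h, rfl, rfl, rfl, rfl⟩
      · intro h
        obtain ⟨x, y, z, i, hik, hw, rfl, rfl, rfl, rfl⟩ := mem_path.mp h
        exact A i x y z hik hw
    | tc a b =>
      constructor
      · intro h
        obtain ⟨zz, ii, hp⟩ := t13 _ _ h
        obtain ⟨x, y, z, i, hi1, hik, rfl, rfl, rfl, rfl⟩ := C _ _ _ _ hp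
        exact mem_tc.mpr ⟨x, y, hwv_transGen (B i x y z hi1 hik hp), rfl, rfl⟩
      · intro h
        obtain ⟨x, y, ht, rfl, rfl⟩ := mem_tc.mp h
        obtain ⟨i, z, hw⟩ := transGen_hwv ht
        obtain ⟨i', z', hik, hw'⟩ := hwv_shorten ⟨z, hw⟩
        exact t14 _ _ _ _ (A i' x y z' hik hw')
end

section
/- In a finite loop-free digraph G = (V,E), there is a directed path of positive length from x to y if and only if there is a directed walk from x to y of length i for some 1 ≤ i ≤ |V|. Consequently, in the unique model of the transitive-closure data-program pair, tc(x,y) holds if and only if (x,y) is in the transitive closure of the edge relation E. -/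
/-- There is a directed walk in `(V,E)` from `x` to `y` of length `i`. -/
def HasWalkLen {V : Type} (E : V → V → Prop) (x y : V) (i : ℕ) : Prop :=
  ∃ u : ℕ → V, u 0 = x ∧ u i = y ∧ ∀ j < i, E (u j) (u (j + 1))

lemma walk_transGen {V : Type} {E : V → V → Prop} :
    ∀ i, 1 ≤ i → ∀ x y : V, HasWalkLen E x y i → Relation.TransGen E x y := by
  intro i
  induction i with
  | zero => omega
  | succ n ih =>
    intro _ x y ⟨u, h0, hn, he⟩
    rcases Nat.eq_zero_or_pos n with h | h
    · subst h
      exact Relation.TransGen.single (h0 ▸ hn ▸ he 0 (by omega))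
    · have : Relation.TransGen E x (u n) :=
        ih h x (u n) ⟨u, h0, rfl, fun j hj => he j (by omega)⟩
      exact this.tail (hn ▸ he n (by omega))

lemma transGen_walk {V : Type} {E : V → V → Prop} {x y : V}
    (h : Relation.TransGen E x y) : ∃ i, 1 ≤ i ∧ HasWalkLen E x y i := by
  induction h with
  | @single b hxy =>
    exact ⟨1, le_refl _, fun m => if m = 0 then x else b, by simp, by simp,
      fun j hj => by interval_cases j <;> simpa⟩
  | @tail b c _ hbc ih =>
    obtain ⟨i, hi, u, h0, hn, he⟩ := ih
    refine ⟨i + 1, by omega, fun m => if m ≤ i then u m else c,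
      by simp [h0], by simp, ?_⟩
    intro j hj
    rcases Nat.lt_or_ge j i with h | h
    · simpa [Nat.le_of_lt h, Nat.succ_le_of_lt h] using he j h
    · have : j = i := by omega
      subst this
      simpa [hn] using hbc

lemma walk_shorten {V : Type} [Fintype V] {E : V → V → Prop} :
    ∀ i, 1 ≤ i → ∀ x y : V, HasWalkLen E x y i →
      ∃ i', 1 ≤ i' ∧ i' ≤ Fintype.card V ∧ HasWalkLen E x y i' := by
  intro i
  induction i using Nat.strong_induction_on with
  | _ i ih =>
    intro hi x y hw
    rcases le_or_gt i (Fintype.card V) with h | h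
    · exact ⟨i, hi, h, hw⟩
    · obtain ⟨u, h0, hn, he⟩ := hw
      obtain ⟨a, b, hab, huab⟩ :=
        Fintype.exists_ne_map_eq_of_card_lt (fun m : Fin i => u m) (by simpa)
      have hmain : ∀ (j j' : ℕ), j < j' → j' < i → u j = u j' →
          ∃ i', 1 ≤ i' ∧ i' < i ∧ HasWalkLen E x y i' := by
        intro j j' hjj' hj'i huab
        set d := j' - j with hd
        have hd1 : 1 ≤ d := by omega
        set u' : ℕ → V := fun m => if m ≤ j then u m else u (m + d) with hu'
        have key : ∃ i', 1 ≤ i' ∧ i' < i ∧ HasWalkLen E x y i' := by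
          refine ⟨i - d, by omega, by omega, u', ?_, ?_, ?_⟩
          · simp [hu', h0]
          · have : ¬ (i - d ≤ j) := by omega
            simp only [hu', this, if_false]
            have : i - d + d = i := by omega
            rw [this, hn]
          · have aux : ∀ m, j ≤ m → u' m = u (m + d) := by
              intro m hm'
              rcases Nat.eq_or_lt_of_le hm' with h' | h'
              · subst h'
                have hjd : j + d = j' := by omega
                simp only [hu', if_pos (le_refl j), hjd]
                exact huab
              · have hne : ¬ m ≤ j := by omega
                simp only [hu', if_neg hne]
            intro m hm
            rcases Nat.lt_or_ge m j with h1 | h1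
            · simpa [hu', Nat.le_of_lt h1, Nat.succ_le_of_lt h1] using he m (by omega)
            · rw [aux m h1, aux (m + 1) (by omega)]
              have hcomm : m + 1 + d = m + d + 1 := by omega
              rw [hcomm]
              exact he (m + d) (by omega)
        exact key
      have habn : (a : ℕ) ≠ (b : ℕ) := fun hh => hab (Fin.ext hh)
      obtain ⟨i', h1, h2, h3⟩ :
          ∃ i', 1 ≤ i' ∧ i' < i ∧ HasWalkLen E x y i' := by
        rcases Nat.lt_or_ge (a : ℕ) (b : ℕ) with hlt | hge
        · exact hmain a b hlt b.isLt huab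
        · exact hmain b a (by omega) a.isLt huab.symm
      exact ih i' h2 h1 x y h3

/-- In a finite loop-free digraph there is a directed path of positive length
from `x` to `y` iff there is a directed walk from `x` to `y` of length `i` for
some `1 ≤ i ≤ |V|`; consequently, in the unique model of the
transitive-closure data-program pair, `tc(x,y)` holds iff `(x,y)` is in the
transitive closure of `E`. -/
theorem stmt8 {V : Type} [Fintype V] (E : V → V → Prop)
    (hloop : ∀ v, ¬ E v v) :
    (∀ x y : V, Relation.TransGen E x y ↔
      ∃ i : ℕ, 1 ≤ i ∧ i ≤ Fintype.card V ∧ HasWalkLen E x y i) ∧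
    (∀ M : Set (TCAtom V), IsTCModel E (Fintype.card V) M →
      ∀ x y : V, TCAtom.tc (.inl x) (.inl y) ∈ M ↔ Relation.TransGen E x y) := by
  have part1 : ∀ x y : V, Relation.TransGen E x y ↔
      ∃ i : ℕ, 1 ≤ i ∧ i ≤ Fintype.card V ∧ HasWalkLen E x y i := by
    intro x y
    constructor
    · intro h
      obtain ⟨i, hi, hw⟩ := transGen_walk h
      exact walk_shorten i hi x y hw
    · rintro ⟨i, hi, _, hw⟩
      exact walk_transGen i hi x y hw
  refine ⟨part1, ?_⟩
  intro M hM x y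
  obtain ⟨hvtx, hedge, hindex, _, _, _, tc4, _, _, tc7, tc8, tc9, tc10, tc11,
    tc12, tc13, tc14⟩ := hM
  have fwd : ∀ n, ∀ x y : V, ∀ z, 1 ≤ n → n ≤ Fintype.card V →
      TCAtom.path (.inl x) (.inl y) z (.inr n) ∈ M → Relation.TransGen E x y := by
    intro n
    induction n with
    | zero => omega
    | succ m ihm =>
      intro x y z _ hle hp
      rcases Nat.eq_zero_or_pos m with h | h
      · subst h
        have hz := tc9 _ _ _ hp
        rw [← hz] at hp
        have he := tc7 _ _ hp
        rw [hedge] at he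
        obtain ⟨v, v', hE, hv, hv'⟩ := he
        cases hv; cases hv'
        exact Relation.TransGen.single hE
      · obtain ⟨w, hw⟩ := tc10 _ _ _ m h hle hp
        have he := tc11 _ _ _ m h hle hp
        rw [hedge] at he
        obtain ⟨v, v', hE, hv, hv'⟩ := he
        subst hv
        cases hv'
        exact (ihm x v w h (by omega) hw).tail hE
  constructor
  · intro htc
    obtain ⟨z, i, hp⟩ := tc13 _ _ htc
    have hidx := tc4 _ _ _ _ hp
    rw [hindex] at hidx
    obtain ⟨n, h1, h2, hn⟩ := hidx
    subst hn
    exact fwd n x y z h1 h2 hp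
  · intro h
    obtain ⟨i, h1, h2, hw⟩ := (part1 x y).mp h
    have bwd : ∀ n, 1 ≤ n → n ≤ Fintype.card V → ∀ y : V, HasWalkLen E x y n →
        ∃ z : V, TCAtom.path (.inl x) (.inl y) (.inl z) (.inr n) ∈ M := by
      intro n
      induction n with
      | zero => omega
      | succ m ihm =>
        rintro _ hle y ⟨u, h0, hn, he⟩
        rcases Nat.eq_zero_or_pos m with hc | hc
        · subst hc
          have hE : E x y := by rw [← h0, ← hn]; exact he 0 (by omega)
          have hm : TCAtom.edge (.inl x) (.inl y) ∈ M :=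
            (hedge _ _).mpr ⟨x, y, hE, rfl, rfl⟩
          exact ⟨x, tc8 _ _ hm⟩
        · obtain ⟨z, hz⟩ :=
            ihm hc (by omega) (u m) ⟨u, h0, rfl, fun j hj => he j (by omega)⟩
          have hE : E (u m) y := hn ▸ he m (by omega)
          have hm : TCAtom.edge (.inl (u m)) (.inl y) ∈ M :=
            (hedge _ _).mpr ⟨_, _, hE, rfl, rfl⟩
          exact ⟨u m, tc12 _ _ _ _ m hc hle hz hm⟩
    obtain ⟨z, hp⟩ := bwd i h1 h2 y hw
    exact tc14 _ _ _ _ hp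
end
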